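/- arXiv:2305.00922 — 15 statements merged into one kernel-verified Lean document; each statement's English description precedes it below -/
import Mathlib

section
/- Let (H, G, φ, R) be a relative Rota-Baxter group. Then the operation h₁ ∘ h₂ := h₁ · φ_{R(h₁)}(h₂) defines a group structure on the set H. -/
/-- For a relative Rota-Baxter group `(H, G, φ, R)`, the operation
`h₁ ∘ h₂ := h₁ * φ (R h₁) h₂` defines a group structure on the set `H`. -/
theorem stmt_0 {H G : Type*} [Group H] [Group G] (φ : G →* MulAut H) (R : H → G)
    (hR : ∀ h₁ h₂ : H, R h₁ * R h₂ = R (h₁ * φ (R h₁) h₂)) :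
    (∀ a b c : H, ((a * φ (R a) b) * φ (R (a * φ (R a) b)) c)
        = a * φ (R a) (b * φ (R b) c)) ∧
    (∀ a : H, (1 : H) * φ (R 1) a = a ∧ a * φ (R a) (1 : H) = a) ∧
    (∀ a : H, ∃ b : H, a * φ (R a) b = 1 ∧ b * φ (R b) a = 1) := by
  have hR1 : R 1 = 1 := by
    have h := hR 1 1
    simp at h
    exact h
  refine ⟨?_, ?_, ?_⟩
  · intro a b c
    rw [← hR a b]
    simp [mul_assoc]
  · intro a
    simp [hR1]
  · intro a
    refine ⟨(φ (R a))⁻¹ a⁻¹, by simp, ?_⟩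
    set b := (φ (R a))⁻¹ a⁻¹ with hb
    have hab : a * φ (R a) b = 1 := by simp [hb]
    have hRb : R b = (R a)⁻¹ := by
      have := hR a b
      rw [hab, hR1] at this
      exact eq_inv_of_mul_eq_one_right this
    rw [hRb, hb]
    simp
end

section
/- Let (H, G, φ, R) be a relative Rota-Baxter group. Then the image R(H) is a subgroup of G. -/
/-- For a relative Rota-Baxter group `(H, G, φ, R)`, the image
`R(H)` is a subgroup of `G`. -/
theorem stmt_2 {H G : Type*} [Group H] [Group G] (φ : G →* MulAut H) (R : H → G)
    (hR : ∀ h₁ h₂ : H, R h₁ * R h₂ = R (h₁ * φ (R h₁) h₂)) :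
    ∃ S : Subgroup G, (S : Set G) = Set.range R := by
  have h1 : R 1 = 1 := by
    have := hR 1 1
    simp at this
    exact this
  refine ⟨{ carrier := Set.range R
            one_mem' := ⟨1, h1⟩
            mul_mem' := ?_
            inv_mem' := ?_ }, rfl⟩
  · rintro a b ⟨x, rfl⟩ ⟨y, rfl⟩
    exact ⟨x * φ (R x) y, (hR x y).symm⟩
  · rintro a ⟨x, rfl⟩
    refine ⟨(φ (R x))⁻¹ x⁻¹, ?_⟩
    have h := hR x ((φ (R x))⁻¹ x⁻¹)
    simp only [MulAut.apply_inv_self] at h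
    rw [mul_inv_cancel, h1] at h
    exact (inv_eq_of_mul_eq_one_right h).symm
end

section
/- Let H and G be groups and φ: G → Aut(H) an action. A map R: H → G is a relative Rota-Baxter operator (i.e., R(h₁)R(h₂) = R(h₁ · φ_{R(h₁)}(h₂)) for all h₁, h₂) if and only if the graph Gr(R) = {(R(h), h) | h ∈ H} is a subgroup of the semidirect product G ⋉_φ H. -/
/-! Since `(h₁, R h₁) * (h₂, R h₂) = (h₁ * φ (R h₁) h₂, R h₁ * R h₂)`, the Rota-Baxter identity says
exactly that the graph is closed under multiplication. For a Rota-Baxter operator, the identity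
with `h₁ = h₂ = 1` gives `R 1 = 1`, and with `h₂ = φ (R h)⁻¹ h⁻¹` it shows that the graph is
closed under inverses. -/

namespace SemidirectProduct

variable {H G : Type*} [Group H] [Group G]

def IsRelativeRotaBaxter (φ : G →* MulAut H) (R : H → G) : Prop :=
  ∀ h₁ h₂ : H, R h₁ * R h₂ = R (h₁ * φ (R h₁) h₂)

/-- Mathlib's `H ⋊[φ] G` lists the `H`-coordinate first, so this is the paper's `{(R h, h)}`. -/
def graph (φ : G →* MulAut H) (R : H → G) : Set (H ⋊[φ] G) :=
  Set.range fun h : H => (⟨h, R h⟩ : H ⋊[φ] G)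

variable {φ : G →* MulAut H} {R : H → G}

theorem mk_mem_graph_iff {h : H} {g : G} : (⟨h, g⟩ : H ⋊[φ] G) ∈ graph φ R ↔ R h = g := by
  constructor
  · rintro ⟨h', hh'⟩
    obtain ⟨rfl, rfl⟩ := SemidirectProduct.ext_iff.mp hh'
    rfl
  · rintro rfl
    exact ⟨h, rfl⟩

theorem isRelativeRotaBaxter_iff_mul_mem_graph :
    IsRelativeRotaBaxter φ R ↔ ∀ a ∈ graph φ R, ∀ b ∈ graph φ R, a * b ∈ graph φ R := by
  constructor
  · rintro hR _ ⟨h₁, rfl⟩ _ ⟨h₂, rfl⟩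
    exact mk_mem_graph_iff.mpr (hR h₁ h₂).symm
  · intro hmul h₁ h₂
    exact (mk_mem_graph_iff.mp (hmul _ ⟨h₁, rfl⟩ _ ⟨h₂, rfl⟩)).symm

namespace IsRelativeRotaBaxter

variable (hR : IsRelativeRotaBaxter φ R)
include hR

theorem map_one : R 1 = 1 := by
  simpa using hR 1 1

theorem map_twisted_inv (h : H) : R (φ (R h)⁻¹ h⁻¹) = (R h)⁻¹ := by
  refine eq_inv_of_mul_eq_one_right ?_
  rw [hR, map_inv φ, MulAut.apply_inv_self, mul_inv_cancel, hR.map_one]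

def graphSubgroup : Subgroup (H ⋊[φ] G) where
  carrier := graph φ R
  mul_mem' {_ _} ha hb := isRelativeRotaBaxter_iff_mul_mem_graph.mp hR _ ha _ hb
  one_mem' := mk_mem_graph_iff.mpr hR.map_one
  inv_mem' := by
    rintro _ ⟨h, rfl⟩
    exact mk_mem_graph_iff.mpr (hR.map_twisted_inv h)

theorem coe_graphSubgroup : (hR.graphSubgroup : Set (H ⋊[φ] G)) = graph φ R := rfl

end IsRelativeRotaBaxter

end SemidirectProduct

/-- A map `R : H → G` is a relative Rota-Baxter operator with respect
to the action `φ` if and only if the graph `Gr(R) = {(R h, h) | h ∈ H}` is a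
subgroup of the semidirect product `G ⋉_φ H` (in Mathlib, `H ⋊[φ] G`). -/
theorem stmt_3 {H G : Type*} [Group H] [Group G] (φ : G →* MulAut H) (R : H → G) :
    (∀ h₁ h₂ : H, R h₁ * R h₂ = R (h₁ * φ (R h₁) h₂)) ↔
    ∃ M : Subgroup (H ⋊[φ] G),
      (M : Set (H ⋊[φ] G)) = Set.range (fun h : H => (⟨h, R h⟩ : H ⋊[φ] G)) := by
  change SemidirectProduct.IsRelativeRotaBaxter φ R ↔
    ∃ M : Subgroup (H ⋊[φ] G), (M : Set _) = SemidirectProduct.graph φ R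
  constructor
  · intro hR
    exact ⟨hR.graphSubgroup, hR.coe_graphSubgroup⟩
  · rintro ⟨M, hM⟩
    refine SemidirectProduct.isRelativeRotaBaxter_iff_mul_mem_graph.mpr ?_
    simpa only [← hM, SetLike.mem_coe] using fun a ha b hb => M.mul_mem ha hb
end

section
/- Let (H, G, φ, R) be a relative Rota-Baxter group. Then the map h ↦ (R(h), h) is a group isomorphism from the descendent group H^{(∘_R)} onto the subgroup Gr(R) = {(R(h), h) | h ∈ H} of G ⋉_φ H. -/
/-- For a relative Rota-Baxter group `(H, G, φ, R)`, the map
`h ↦ (R h, h)` is a group isomorphism from the descendent group `H^{(∘_R)}`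
(with `h₁ ∘_R h₂ = h₁ * φ (R h₁) h₂`) onto the subgroup `Gr(R)` of `G ⋉_φ H`. -/
theorem stmt_4 {H G : Type*} [Group H] [Group G] (φ : G →* MulAut H) (R : H → G)
    (hR : ∀ h₁ h₂ : H, R h₁ * R h₂ = R (h₁ * φ (R h₁) h₂))
    (M : Subgroup (H ⋊[φ] G))
    (hM : (M : Set (H ⋊[φ] G)) = Set.range (fun h : H => (⟨h, R h⟩ : H ⋊[φ] G))) :
    ∃ f : H → M, Function.Bijective f ∧
      (∀ h : H, (f h : H ⋊[φ] G) = ⟨h, R h⟩) ∧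
      (∀ h₁ h₂ : H, f (h₁ * φ (R h₁) h₂) = f h₁ * f h₂) := by
  have hmem : ∀ h : H, (⟨h, R h⟩ : H ⋊[φ] G) ∈ M := by
    intro h
    rw [← SetLike.mem_coe, hM]
    exact ⟨h, rfl⟩
  refine ⟨fun h => ⟨⟨h, R h⟩, hmem h⟩, ⟨?_, ?_⟩, fun h => rfl, ?_⟩
  · intro a b hab
    have := congrArg (fun x : M => (x : H ⋊[φ] G).left) hab
    simpa using this
  · rintro ⟨x, hx⟩
    rw [← SetLike.mem_coe, hM] at hx
    obtain ⟨h, rfl⟩ := hx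
    exact ⟨h, rfl⟩
  · intro h₁ h₂
    ext
    · rfl
    · exact (hR h₁ h₂).symm
end

section
/- Let (H, ·, ∘) be a skew left brace with λ-map λ: H^{(∘)} → Aut(H^{(·)}) given by λ_a(b) = a⁻¹ · (a ∘ b). Then (H^{(·)}, H^{(∘)}, λ, Id_H) is a relative Rota-Baxter group, and the skew left brace induced by the operator Id_H coincides with (H, ·, ∘). -/
/-- Let `(H, ·, ∘)` be a skew left brace (here `·` is the group
operation of `H` and `∘` is a second group operation `op` with the same identity,
satisfying the brace compatibility). With `λ_a b = a⁻¹ * op a b`, the quadruple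
`(H^{(·)}, H^{(∘)}, λ, Id_H)` is a relative Rota-Baxter group: `Id_H` satisfies the
relative Rota-Baxter identity (products of `R`-values taken in `(H, ∘)`), and the
skew left brace induced by `Id_H` coincides with `(H, ·, ∘)`. -/
theorem stmt_7 {H : Type*} [Group H] (op : H → H → H)
    (hassoc : ∀ a b c : H, op (op a b) c = op a (op b c))
    (hone : ∀ a : H, op 1 a = a ∧ op a 1 = a)
    (hinv : ∀ a : H, ∃ b : H, op a b = 1 ∧ op b a = 1)
    (hbrace : ∀ a b c : H, op a (b * c) = op a b * a⁻¹ * op a c) :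
    -- the relative Rota-Baxter identity for R = Id_H with action λ
    (∀ h₁ h₂ : H, op h₁ h₂ = h₁ * (h₁⁻¹ * op h₁ h₂)) ∧
    -- λ is an action by automorphisms of (H, ·)
    (∀ a : H, Function.Bijective (fun b => a⁻¹ * op a b)) ∧
    (∀ a b c : H, a⁻¹ * op a (b * c) = (a⁻¹ * op a b) * (a⁻¹ * op a c)) ∧
    (∀ a b c : H, (op a b)⁻¹ * op (op a b) c = a⁻¹ * op a (b⁻¹ * op b c)) ∧
    -- the induced skew left brace coincides with (H, ·, ∘)
    (∀ h₁ h₂ : H, h₁ * (h₁⁻¹ * op h₁ h₂) = op h₁ h₂) := by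
  have hmul : ∀ a b c : H, a⁻¹ * op a (b * c) = (a⁻¹ * op a b) * (a⁻¹ * op a c) := by
    intro a b c
    rw [hbrace]
    group
  refine ⟨fun h₁ h₂ => by group, ?_, hmul, ?_, fun h₁ h₂ => by group⟩
  · intro a
    obtain ⟨a', ha1, ha2⟩ := hinv a
    constructor
    · intro b c h
      simp only at h
      have h2 : op a b = op a c := mul_left_cancel h
      have h3 : op a' (op a b) = op a' (op a c) := by rw [h2]
      rwa [← hassoc, ← hassoc, ha2, (hone b).1, (hone c).1] at h3
    · intro y
      refine ⟨op a' (a * y), ?_⟩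
      simp only
      rw [← hassoc, ha1, (hone _).1]
      group
  · intro a b c
    have hinvmap : a⁻¹ * op a b⁻¹ = (a⁻¹ * op a b)⁻¹ := by
      have h1 := hmul a b b⁻¹
      rw [mul_inv_cancel, (hone a).2, inv_mul_cancel] at h1
      exact (inv_eq_of_mul_eq_one_right h1.symm).symm
    rw [hmul, hinvmap, ← hassoc]
    group
end

section
/- There is a bijection between the set RB(H, G, φ) of relative Rota-Baxter operators R: H → G with respect to the action φ, and the set S(H, G, φ) of subgroups M of G ⋉_φ H such that the projection onto the second coordinate restricts to a bijection M → H. The bijection sends R to its graph Gr(R) = {(R(h), h) | h ∈ H}, and conversely sends M to the map R_M defined by R_M(h) = the unique g with (g, h) ∈ M. -/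
/-!
The graph `{(h, R h)}` of a map `R : H → G` is closed under the multiplication of `H ⋊[φ] G`
exactly when `R` satisfies the relative Rota–Baxter identity, since
`(h₁, R h₁) * (h₂, R h₂) = (h₁ * φ (R h₁) h₂, R h₁ * R h₂)`. Conversely, a subgroup on which
the projection to `H` is bijective is the graph of the map reading off the `G`-coordinate
above each `h`, and closure under multiplication is then the Rota–Baxter identity for that map.
-/

open Function

namespace SemidirectProduct

variable {H G : Type*} [Group H] [Group G]

def IsRelRotaBaxter (φ : G →* MulAut H) (R : H → G) : Prop :=
  ∀ h₁ h₂ : H, R h₁ * R h₂ = R (h₁ * φ (R h₁) h₂)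

variable {φ : G →* MulAut H}

namespace IsRelRotaBaxter

variable {R : H → G} (hR : IsRelRotaBaxter φ R)
include hR

theorem map_one : R 1 = 1 := by
  simpa using hR 1 1

theorem map_inv (h : H) : R (φ (R h)⁻¹ h⁻¹) = (R h)⁻¹ := by
  have := hR h (φ (R h)⁻¹ h⁻¹)
  rw [_root_.map_inv φ] at this ⊢
  rw [MulAut.apply_inv_self, mul_inv_cancel, hR.map_one] at this
  exact eq_inv_of_mul_eq_one_right this

def graph : Subgroup (H ⋊[φ] G) where
  carrier := {x | R x.left = x.right}
  mul_mem' {x y} (hx : R x.left = x.right) (hy : R y.left = y.right) := by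
    change R (x.left * φ x.right y.left) = x.right * y.right
    rw [← hx, ← hy, hR]
  one_mem' := hR.map_one
  inv_mem' {x} (hx : R x.left = x.right) := by
    change R (φ x.right⁻¹ x.left⁻¹) = x.right⁻¹
    rw [← hx, hR.map_inv]

theorem mem_graph_iff {x : H ⋊[φ] G} : x ∈ hR.graph ↔ R x.left = x.right := Iff.rfl

theorem coe_graph :
    (hR.graph : Set (H ⋊[φ] G)) = Set.range fun h => (⟨h, R h⟩ : H ⋊[φ] G) := by
  ext x
  refine ⟨fun hx => ⟨x.left, SemidirectProduct.ext rfl hx⟩, ?_⟩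
  rintro ⟨h, rfl⟩
  exact rfl

theorem bijective_left_graph : Bijective fun x : hR.graph => (x : H ⋊[φ] G).left := by
  refine ⟨fun x y hxy => Subtype.ext (SemidirectProduct.ext hxy ?_),
    fun h => ⟨⟨⟨h, R h⟩, rfl⟩, rfl⟩⟩
  rw [← hR.mem_graph_iff.mp x.2, ← hR.mem_graph_iff.mp y.2]
  exact congrArg R hxy

end IsRelRotaBaxter

section OfBijective

variable {M : Subgroup (H ⋊[φ] G)} (hM : Bijective fun m : M => (m : H ⋊[φ] G).left)

noncomputable def rotaBaxterOf (h : H) : G :=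
  ((Equiv.ofBijective _ hM).symm h : H ⋊[φ] G).right

theorem mk_rotaBaxterOf_mem (h : H) : (⟨h, rotaBaxterOf hM h⟩ : H ⋊[φ] G) ∈ M := by
  have hleft : ((Equiv.ofBijective _ hM).symm h : H ⋊[φ] G).left = h :=
    (Equiv.ofBijective _ hM).apply_symm_apply h
  convert ((Equiv.ofBijective _ hM).symm h).2 using 1
  exact SemidirectProduct.ext hleft.symm rfl

theorem rotaBaxterOf_eq_of_mem {h : H} {g : G} (hg : (⟨h, g⟩ : H ⋊[φ] G) ∈ M) :
    rotaBaxterOf hM h = g := by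
  have : (Equiv.ofBijective _ hM).symm h = ⟨⟨h, g⟩, hg⟩ := (Equiv.symm_apply_eq _).mpr rfl
  simp [rotaBaxterOf, this]

theorem mem_iff_rotaBaxterOf {x : H ⋊[φ] G} : x ∈ M ↔ rotaBaxterOf hM x.left = x.right :=
  ⟨rotaBaxterOf_eq_of_mem hM, fun hx => by simpa only [hx] using mk_rotaBaxterOf_mem hM x.left⟩

theorem isRelRotaBaxter_rotaBaxterOf : IsRelRotaBaxter φ (rotaBaxterOf hM) := fun h₁ h₂ =>
  (rotaBaxterOf_eq_of_mem hM
    (mul_mem (mk_rotaBaxterOf_mem hM h₁) (mk_rotaBaxterOf_mem hM h₂))).symm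

end OfBijective

variable (φ) in
noncomputable def rotaBaxterEquivSubgroup :
    {R : H → G // IsRelRotaBaxter φ R} ≃
      {M : Subgroup (H ⋊[φ] G) // Bijective fun m : M => (m : H ⋊[φ] G).left} where
  toFun R := ⟨R.2.graph, R.2.bijective_left_graph⟩
  invFun M := ⟨rotaBaxterOf M.2, isRelRotaBaxter_rotaBaxterOf M.2⟩
  left_inv R := Subtype.ext <| funext fun _ =>
    rotaBaxterOf_eq_of_mem _ (R.2.mem_graph_iff.mpr rfl)
  right_inv M := Subtype.ext <| SetLike.ext fun _ =>
    (mem_iff_rotaBaxterOf M.2).symm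

end SemidirectProduct

open SemidirectProduct in
/-- There is a bijection between the set `RB(H, G, φ)` of relative
Rota-Baxter operators `R : H → G` and the set `S(H, G, φ)` of subgroups `M` of
`G ⋉_φ H` for which projection to the `H`-coordinate is a bijection `M → H`.
The bijection sends `R` to its graph, and conversely sends `M` to `R_M`, the map
assigning to `h` the unique `g` with `(g, h) ∈ M`. -/
theorem stmt_9 {H G : Type*} [Group H] [Group G] (φ : G →* MulAut H) :
    ∃ e : {R : H → G // ∀ h₁ h₂ : H, R h₁ * R h₂ = R (h₁ * φ (R h₁) h₂)} ≃
          {M : Subgroup (H ⋊[φ] G) //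
            Function.Bijective (fun m : M => (m : H ⋊[φ] G).left)},
      (∀ R, (((e R).1 : Subgroup (H ⋊[φ] G)) : Set (H ⋊[φ] G))
          = Set.range (fun h : H => (⟨h, R.1 h⟩ : H ⋊[φ] G))) ∧
      (∀ M, ∀ h : H, (⟨h, (e.symm M).1 h⟩ : H ⋊[φ] G) ∈ M.1) :=
  ⟨rotaBaxterEquivSubgroup φ, fun R => IsRelRotaBaxter.coe_graph R.2,
    fun M => mk_rotaBaxterOf_mem M.2⟩
end

section
/- Two Rota-Baxter operators R and B on a group H induce isomorphic skew left braces if and only if there exists a group automorphism ψ of H such that ψ(R(h))⁻¹ · B(ψ(h)) ∈ Z(H) for all h ∈ H. -/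
/-- Two Rota-Baxter operators `R` and `B` on a group `H` induce
isomorphic skew left braces if and only if there is a group automorphism `ψ` of
`H` with `(ψ (R h))⁻¹ * B (ψ h) ∈ Z(H)` for all `h ∈ H`. -/
theorem stmt_10 {H : Type*} [Group H] (R B : H → H)
    (hR : ∀ x y : H, R x * R y = R (x * R x * y * (R x)⁻¹))
    (hB : ∀ x y : H, B x * B y = B (x * B x * y * (B x)⁻¹)) :
    (∃ ψ : H ≃* H, ∀ x y : H,
        ψ (x * R x * y * (R x)⁻¹) = ψ x * B (ψ x) * ψ y * (B (ψ x))⁻¹) ↔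
    (∃ ψ : H ≃* H, ∀ h : H, (ψ (R h))⁻¹ * B (ψ h) ∈ Subgroup.center H) := by
  constructor
  · rintro ⟨ψ, h⟩
    refine ⟨ψ, fun h0 => Subgroup.mem_center_iff.mpr fun g => ?_⟩
    obtain ⟨y, rfl⟩ := ψ.surjective g
    have key := h h0 y
    simp only [map_mul, map_inv] at key
    have key2 : ψ (R h0) * ψ y * (ψ (R h0))⁻¹ = B (ψ h0) * ψ y * (B (ψ h0))⁻¹ := by
      have h1 : ψ h0 * (ψ (R h0) * ψ y * (ψ (R h0))⁻¹) =
          ψ h0 * (B (ψ h0) * ψ y * (B (ψ h0))⁻¹) := by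
        simpa [mul_assoc] using key
      exact mul_left_cancel h1
    calc ψ y * ((ψ (R h0))⁻¹ * B (ψ h0))
        = (ψ (R h0))⁻¹ * (ψ (R h0) * ψ y * (ψ (R h0))⁻¹) * B (ψ h0) := by group
      _ = (ψ (R h0))⁻¹ * (B (ψ h0) * ψ y * (B (ψ h0))⁻¹) * B (ψ h0) := by rw [key2]
      _ = (ψ (R h0))⁻¹ * B (ψ h0) * ψ y := by group
  · rintro ⟨ψ, h⟩
    refine ⟨ψ, fun x y => ?_⟩
    have hz := Subgroup.mem_center_iff.mp (h x)
    have hB' : B (ψ x) = ψ (R x) * ((ψ (R x))⁻¹ * B (ψ x)) := by group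
    simp only [map_mul, map_inv]
    rw [hB']
    have hc := hz (ψ y)
    calc ψ x * ψ (R x) * ψ y * (ψ (R x))⁻¹
        = ψ x * ψ (R x) * (ψ y * ((ψ (R x))⁻¹ * B (ψ x))) *
            ((ψ (R x))⁻¹ * B (ψ x))⁻¹ * (ψ (R x))⁻¹ := by group
      _ = ψ x * ψ (R x) * ((ψ (R x))⁻¹ * B (ψ x) * ψ y) *
            ((ψ (R x))⁻¹ * B (ψ x))⁻¹ * (ψ (R x))⁻¹ := by rw [hc]
      _ = ψ x * (ψ (R x) * ((ψ (R x))⁻¹ * B (ψ x))) * ψ y *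
            (ψ (R x) * ((ψ (R x))⁻¹ * B (ψ x)))⁻¹ := by group
end

section
/- A homomorphism (ψ, η) of relative Rota-Baxter groups from (H, G, φ, R) to (K, L, φ', S) induces a homomorphism ψ: H_R → K_S of the corresponding induced skew left braces; that is, ψ(h₁ ∘_R h₂) = ψ(h₁) ∘_S ψ(h₂) for all h₁, h₂ ∈ H. -/
/-- A homomorphism `(ψ, η)` of relative Rota-Baxter groups from
`(H, G, φ, R)` to `(K, L, φ', S)` induces a homomorphism `ψ : H_R → K_S` of the
induced skew left braces: `ψ (h₁ ∘_R h₂) = ψ h₁ ∘_S ψ h₂`. -/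
theorem stmt_11 {H G K L : Type*} [Group H] [Group G] [Group K] [Group L]
    (φ : G →* MulAut H) (R : H → G)
    (hR : ∀ h₁ h₂ : H, R h₁ * R h₂ = R (h₁ * φ (R h₁) h₂))
    (φ' : L →* MulAut K) (S : K → L)
    (hS : ∀ k₁ k₂ : K, S k₁ * S k₂ = S (k₁ * φ' (S k₁) k₂))
    (ψ : H →* K) (η : G →* L)
    (h₁ : ∀ h : H, η (R h) = S (ψ h))
    (h₂ : ∀ (g : G) (h : H), ψ (φ g h) = φ' (η g) (ψ h)) :
    ∀ a b : H, ψ (a * φ (R a) b) = ψ a * φ' (S (ψ a)) (ψ b) := by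
  intro a b
  rw [map_mul, h₂, h₁]
end

section
/- Let (H, G, φ, R) and (K, L, φ', S) be relative Rota-Baxter groups with R and S bijective. Then every skew left brace homomorphism ψ: H_R → K_S extends uniquely to a homomorphism (ψ, η) of relative Rota-Baxter groups, where η: G → L is defined by η(R(h)) = S(ψ(h)); consequently there is a bijection between Hom(H_R, K_S) and Hom((H,G,φ,R),(K,L,φ',S)). -/
/-- For relative Rota-Baxter groups `(H, G, φ, R)` and
`(K, L, φ', S)` with `R` and `S` bijective, every skew left brace homomorphism
`ψ : H_R → K_S` extends uniquely to a homomorphism `(ψ, η)` of relative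
Rota-Baxter groups, where `η` satisfies `η (R h) = S (ψ h)`. -/
theorem stmt_12 {H G K L : Type*} [Group H] [Group G] [Group K] [Group L]
    (φ : G →* MulAut H) (R : H → G)
    (hR : ∀ h₁ h₂ : H, R h₁ * R h₂ = R (h₁ * φ (R h₁) h₂))
    (φ' : L →* MulAut K) (S : K → L)
    (hS : ∀ k₁ k₂ : K, S k₁ * S k₂ = S (k₁ * φ' (S k₁) k₂))
    (hRbij : Function.Bijective R) (hSbij : Function.Bijective S)
    (ψ : H →* K)
    (hψ : ∀ a b : H, ψ (a * φ (R a) b) = ψ a * φ' (S (ψ a)) (ψ b)) :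
    ∃! η : G →* L, (∀ h : H, η (R h) = S (ψ h)) ∧
      (∀ (g : G) (h : H), ψ (φ g h) = φ' (η g) (ψ h)) := by
  set e := Equiv.ofBijective R hRbij with he
  have hsymm : ∀ h : H, e.symm (R h) = h := fun h => e.symm_apply_apply h
  have hmul : ∀ g₁ g₂ : G, S (ψ (e.symm (g₁ * g₂)))
      = S (ψ (e.symm g₁)) * S (ψ (e.symm g₂)) := by
    intro g₁ g₂
    obtain ⟨a, rfl⟩ := hRbij.2 g₁
    obtain ⟨b, rfl⟩ := hRbij.2 g₂
    rw [hR a b, hsymm, hsymm, hsymm, hψ, hS]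
  refine ⟨MonoidHom.mk' (fun g => S (ψ (e.symm g))) hmul, ⟨?_, ?_⟩, ?_⟩
  · intro h
    simp [hsymm]
  · intro g h
    obtain ⟨a, rfl⟩ := hRbij.2 g
    have := hψ a h
    rw [map_mul] at this
    have h2 : φ' (S (ψ (e.symm (R a)))) (ψ h) = φ' (S (ψ a)) (ψ h) := by
      rw [hsymm]
    simp only [MonoidHom.mk'_apply, h2]
    exact mul_left_cancel this
  · intro η' ⟨h1, _⟩
    ext g
    obtain ⟨a, rfl⟩ := hRbij.2 g
    simp [h1, hsymm]
end

section
/- Let (H, G, φ, R) be a relative Rota-Baxter group and (K, L, φ|, R|) an ideal of it. Then the induced maps φ̄: G/L → Aut(H/K), φ̄_{ḡ}(h̄) = φ_g(h)-bar, and R̄: H/K → G/L, R̄(h̄) = R(h)-bar, are well-defined, and (H/K, G/L, φ̄, R̄) is a relative Rota-Baxter group. -/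
/-- If `(K, L, φ|, R|)` is an ideal of a relative Rota-Baxter group
`(H, G, φ, R)`, then the induced maps `φ̄ : G/L → Aut(H/K)` and `R̄ : H/K → G/L`
are well-defined, and `(H/K, G/L, φ̄, R̄)` is a relative Rota-Baxter group. -/
theorem stmt_13 {H G : Type*} [Group H] [Group G] (φ : G →* MulAut H) (R : H → G)
    (hR : ∀ h₁ h₂ : H, R h₁ * R h₂ = R (h₁ * φ (R h₁) h₂))
    (K : Subgroup H) (L : Subgroup G) [K.Normal] [L.Normal]
    (hKinv : ∀ g : G, ∀ k ∈ K, φ g k ∈ K)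
    (hRK : ∀ k ∈ K, R k ∈ L)
    (hL : ∀ l ∈ L, ∀ h : H, φ l h * h⁻¹ ∈ K) :
    ∃ (φbar : G ⧸ L →* MulAut (H ⧸ K)) (Rbar : H ⧸ K → G ⧸ L),
      (∀ (g : G) (h : H),
        φbar ((g : G ⧸ L)) ((h : H ⧸ K)) = ((φ g h : H) : H ⧸ K)) ∧
      (∀ h : H, Rbar ((h : H ⧸ K)) = ((R h : G) : G ⧸ L)) ∧
      (∀ a b : H ⧸ K, Rbar a * Rbar b = Rbar (a * φbar (Rbar a) b)) := by
  have key : ∀ (g : G) (h : H), φ g⁻¹ (φ g h) = h := by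
    intro g h
    have : (φ g⁻¹ * φ g) h = h := by rw [← map_mul]; simp
    simpa [MulAut.mul_apply] using this
  have hKle : ∀ g : G, K ≤ K.comap (φ g).toMonoidHom := fun g k hk => hKinv g k hk
  let aut : G → MulAut (H ⧸ K) := fun g =>
    { toFun := QuotientGroup.map K K (φ g).toMonoidHom (hKle g)
      invFun := QuotientGroup.map K K (φ g⁻¹).toMonoidHom (hKle g⁻¹)
      left_inv := fun x => by
        induction x using QuotientGroup.induction_on with
        | _ h => simp [QuotientGroup.map_mk, key]
      right_inv := fun x => by
        induction x using QuotientGroup.induction_on with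
        | _ h =>
          have : φ g (φ g⁻¹ h) = h := by simpa using key g⁻¹ h
          simp [QuotientGroup.map_mk, this]
      map_mul' := map_mul _ }
  have aut_apply : ∀ (g : G) (h : H), aut g ((h : H ⧸ K)) = ((φ g h : H) : H ⧸ K) := by
    intro g h
    simp [aut, QuotientGroup.map_mk]
  let autHom : G →* MulAut (H ⧸ K) := MonoidHom.mk' aut (by
    intro g₁ g₂
    apply MulEquiv.ext
    intro x
    induction x using QuotientGroup.induction_on with
    | _ h =>
      rw [MulAut.mul_apply, aut_apply, aut_apply, aut_apply, map_mul, MulAut.mul_apply])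
  have hker : ∀ l ∈ L, autHom l = 1 := by
    intro l hl
    apply MulEquiv.ext
    intro x
    induction x using QuotientGroup.induction_on with
    | _ h =>
      show aut l ((h : H ⧸ K)) = (h : H ⧸ K)
      rw [aut_apply, QuotientGroup.eq]
      have h1 : φ l h * h⁻¹ ∈ K := hL l hl h
      have h2 : h * (φ l h)⁻¹ ∈ K := by simpa using K.inv_mem h1
      have : (φ l h)⁻¹ * (h * (φ l h)⁻¹) * ((φ l h)⁻¹)⁻¹ ∈ K :=
        Subgroup.Normal.conj_mem ‹K.Normal› _ h2 _
      simpa [mul_assoc] using this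
  let φbar : G ⧸ L →* MulAut (H ⧸ K) := QuotientGroup.lift L autHom hker
  have φbar_apply : ∀ (g : G) (h : H),
      φbar ((g : G ⧸ L)) ((h : H ⧸ K)) = ((φ g h : H) : H ⧸ K) := by
    intro g h
    show autHom g ((h : H ⧸ K)) = _
    exact aut_apply g h
  have Rdesc : ∀ a b : H, a⁻¹ * b ∈ K → ((R a : G) : G ⧸ L) = ((R b : G) : G ⧸ L) := by
    intro a b hab
    rw [QuotientGroup.eq]
    set k := a⁻¹ * b with hk
    have hkK : k ∈ K := hab
    have hb : b = a * k := by rw [hk]; group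
    have hk' : φ (R a)⁻¹ k ∈ K := hKinv _ _ hkK
    have : R a * R (φ (R a)⁻¹ k) = R b := by
      rw [hR, hb]
      congr 2
      simpa using key (R a)⁻¹ k
    rw [← this]
    simpa using hRK _ hk'
  let Rbar : H ⧸ K → G ⧸ L := fun x =>
    Quotient.liftOn' x (fun h => ((R h : G) : G ⧸ L)) (by
      intro a b hab
      exact Rdesc a b ((QuotientGroup.leftRel_apply).mp hab))
  have Rbar_apply : ∀ h : H, Rbar ((h : H ⧸ K)) = ((R h : G) : G ⧸ L) := fun h => rfl
  refine ⟨φbar, Rbar, φbar_apply, Rbar_apply, ?_⟩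
  intro a b
  induction a using QuotientGroup.induction_on with
  | _ h₁ =>
    induction b using QuotientGroup.induction_on with
    | _ h₂ =>
      rw [Rbar_apply, Rbar_apply, φbar_apply]
      have : ((h₁ : H ⧸ K)) * ((φ (R h₁) h₂ : H) : H ⧸ K)
          = ((h₁ * φ (R h₁) h₂ : H) : H ⧸ K) := rfl
      rw [this, Rbar_apply, ← hR, QuotientGroup.mk_mul]
end

section
/- Let (H, G, φ, R) be a relative Rota-Baxter group and (K, L, φ|, R|) an ideal of it. Then K is an ideal of the induced skew left brace H_R = (H, ·, ∘_R): K is normal in (H, ·), K is normal in (H, ∘_R), and λ_a(K) ⊆ K for all a ∈ H where λ_a(b) = φ_{R(a)}(b). -/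
/-- If `(K, L, φ|, R|)` is an ideal of the relative Rota-Baxter group
`(H, G, φ, R)`, then `K` is an ideal of the induced skew left brace `H_R`:
`K` is normal in `(H, ·)`, normal in `(H, ∘_R)` (with `∘_R`-inverse
`h† = (φ (R h))⁻¹ h⁻¹`), and `λ_a (K) ⊆ K` for all `a`, where `λ_a = φ (R a)`. -/
theorem stmt_14 {H G : Type*} [Group H] [Group G] (φ : G →* MulAut H) (R : H → G)
    (hR : ∀ h₁ h₂ : H, R h₁ * R h₂ = R (h₁ * φ (R h₁) h₂))
    (K : Subgroup H) (L : Subgroup G) [K.Normal] [L.Normal]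
    (hKinv : ∀ g : G, ∀ k ∈ K, φ g k ∈ K)
    (hRK : ∀ k ∈ K, R k ∈ L)
    (hL : ∀ l ∈ L, ∀ h : H, φ l h * h⁻¹ ∈ K) :
    -- K is normal in (H, ·)
    (∀ h : H, ∀ k ∈ K, h * k * h⁻¹ ∈ K) ∧
    -- K is normal in (H, ∘_R): h ∘_R k ∘_R h† ∈ K, where h† = (φ (R h))⁻¹ h⁻¹
    (∀ h : H, ∀ k ∈ K,
      (h * φ (R h) k) * φ (R (h * φ (R h) k)) ((φ (R h))⁻¹ h⁻¹) ∈ K) ∧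
    -- λ_a (K) ⊆ K
    (∀ a : H, ∀ k ∈ K, φ (R a) k ∈ K) := by
  refine ⟨fun h k hk => ‹K.Normal›.conj_mem k hk h, fun h k hk => ?_,
    fun a k hk => hKinv _ k hk⟩
  have hx : R (h * φ (R h) k) = R h * R k := (hR h k).symm
  rw [hx, map_mul, MulAut.mul_apply]
  set u : H := (φ (R h))⁻¹ h⁻¹ with hu
  have hk1 : φ (R k) u * u⁻¹ ∈ K := hL (R k) (hRK k hk) u
  have hsplit : φ (R k) u = (φ (R k) u * u⁻¹) * u := by group
  have hφu : φ (R h) u = h⁻¹ := by simp [hu]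
  have heq : h * φ (R h) k * φ (R h) (φ (R k) u)
      = h * (φ (R h) k * φ (R h) (φ (R k) u * u⁻¹)) * h⁻¹ := by
    rw [map_mul, map_inv, hφu]
    group
  rw [heq]
  exact ‹K.Normal›.conj_mem _ (K.mul_mem (hKinv _ k hk) (hKinv _ _ hk1)) h
end

section
/- Let (H, G, φ, R) be a relative Rota-Baxter group and let Z^φ_R(H) = Z(H) ∩ Ker(φ∘R) ∩ Fix(φ), where Fix(φ) = {x ∈ H | φ_g(x) = x for all g ∈ G}. Then (Z^φ_R(H), Ker(φ), φ|, R|) is an ideal of (H, G, φ, R), and the skew left brace it induces is trivial (x ∘_R y = x·y on Z^φ_R(H)). -/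
/-- For a relative Rota-Baxter group `(H, G, φ, R)`, the set
`Z^φ_R(H) = Z(H) ∩ Ker(φ∘R) ∩ Fix(φ)` together with `Ker φ` forms an ideal
`(Z^φ_R(H), Ker φ, φ|, R|)` of `(H, G, φ, R)`, and the induced skew left brace
on it is trivial. -/
theorem stmt_15 {H G : Type*} [Group H] [Group G] (φ : G →* MulAut H) (R : H → G)
    (hR : ∀ h₁ h₂ : H, R h₁ * R h₂ = R (h₁ * φ (R h₁) h₂)) :
    ∃ Z : Subgroup H,
      (Z : Set H) = {x : H | x ∈ Subgroup.center H ∧ (∀ h : H, φ (R x) h = h) ∧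
        (∀ g : G, φ g x = x)} ∧
      Z.Normal ∧
      (∀ g : G, ∀ k ∈ Z, φ g k ∈ Z) ∧
      (∀ k ∈ Z, R k ∈ φ.ker) ∧
      (∀ l ∈ φ.ker, ∀ h : H, φ l h * h⁻¹ ∈ Z) ∧
      (∀ x ∈ Z, ∀ y ∈ Z, x * φ (R x) y = x * y) := by
  have hR1 : R 1 = 1 := by
    have h := hR 1 1
    simp at h
    exact h
  refine ⟨{
    carrier := {x : H | x ∈ Subgroup.center H ∧ (∀ h : H, φ (R x) h = h) ∧
        (∀ g : G, φ g x = x)}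
    one_mem' := by
      refine ⟨Subgroup.one_mem _, ?_, fun g => map_one (φ g)⟩
      intro h; rw [hR1]; simp
    mul_mem' := by
      rintro x y ⟨hxc, hxk, hxf⟩ ⟨hyc, hyk, hyf⟩
      refine ⟨Subgroup.mul_mem _ hxc hyc, ?_, fun g => by rw [map_mul, hxf g, hyf g]⟩
      intro h
      have hxy : R x * R y = R (x * y) := by
        rw [hR x y, hxk y]
      rw [← hxy]
      simp only [map_mul, MulAut.mul_apply]
      rw [hyk h, hxk h]
    inv_mem' := by
      rintro x ⟨hxc, hxk, hxf⟩
      have hinv : R x⁻¹ = (R x)⁻¹ := by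
        have h := hR x⁻¹ x
        rw [hxf (R x⁻¹)] at h
        simp [hR1] at h
        exact eq_inv_of_mul_eq_one_left h
      refine ⟨Subgroup.inv_mem _ hxc, ?_, fun g => by rw [map_inv, hxf g]⟩
      intro h
      rw [hinv, map_inv]
      have : φ (R x) ((φ (R x))⁻¹ h) = (φ (R x))⁻¹ h := hxk _
      calc (φ (R x))⁻¹ h = φ (R x) ((φ (R x))⁻¹ h) := (hxk _).symm
        _ = h := by simp }, rfl, ?_, ?_, ?_, ?_, ?_⟩
  · constructor
    intro n hn g
    rcases hn with ⟨hc, hk, hf⟩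
    have : g * n * g⁻¹ = n := by
      rw [← hc.comm g]; group
    rw [this]; exact ⟨hc, hk, hf⟩
  · rintro g k ⟨hc, hk, hf⟩
    rw [show φ g k = k from hf g]; exact ⟨hc, hk, hf⟩
  · rintro k ⟨hc, hk, hf⟩
    rw [MonoidHom.mem_ker]
    ext h; exact hk h
  · intro l hl h
    rw [MonoidHom.mem_ker] at hl
    rw [hl]
    simp only [MulAut.one_apply, mul_inv_cancel]
    exact ⟨Subgroup.one_mem _, fun h' => by rw [hR1]; simp, fun g => map_one (φ g)⟩
  · rintro x ⟨hc, hk, hf⟩ y hy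
    rw [hk y]
end

section
/- Let (H, G, φ, R) be a relative Rota-Baxter group with R surjective (i.e., Im(R) = G). Then Z^φ_R(H) = Z(H) ∩ Ker(φ∘R) ∩ Fix(φ) equals the annihilator Ann(H_R) of the induced skew left brace H_R. -/
/-- For a relative Rota-Baxter group `(H, G, φ, R)` with `R`
surjective, `Z^φ_R(H) = Z(H) ∩ Ker(φ∘R) ∩ Fix(φ)` equals the annihilator of the
induced skew left brace `H_R` (with `a ∘_R b = a * φ (R a) b`). -/
theorem stmt_16 {H G : Type*} [Group H] [Group G] (φ : G →* MulAut H) (R : H → G)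
    (hR : ∀ h₁ h₂ : H, R h₁ * R h₂ = R (h₁ * φ (R h₁) h₂))
    (hsurj : Function.Surjective R) :
    {x : H | x ∈ Subgroup.center H ∧ (∀ h : H, φ (R x) h = h) ∧
      (∀ g : G, φ g x = x)} =
    {a : H | ∀ b : H, b * φ (R b) a = a * φ (R a) b ∧
      a * φ (R a) b = b * a ∧ b * a = a * b} := by
  ext a
  simp only [Set.mem_setOf_eq]
  constructor
  · rintro ⟨hz, hker, hfix⟩ b
    have hc := (Subgroup.mem_center_iff.mp hz) b
    rw [hker b, hfix (R b), hc]
    exact ⟨rfl, rfl, rfl⟩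
  · intro h
    have hker : ∀ b : H, φ (R a) b = b := by
      intro b
      have := (h b).2.1
      rw [(h b).2.2] at this
      exact mul_left_cancel this
    have hfixR : ∀ b : H, φ (R b) a = a := by
      intro b
      have := (h b).1
      rw [hker b, ← (h b).2.2] at this
      exact mul_left_cancel this
    refine ⟨Subgroup.mem_center_iff.mpr fun b => (h b).2.2, hker, ?_⟩
    intro g
    obtain ⟨b, rfl⟩ := hsurj g
    exact hfixR b
end

section
/- Let (H, G, φ, R) be a relative Rota-Baxter group and let H^(2) be the subgroup of H generated by {φ_g(h)h⁻¹ | h ∈ H, g ∈ G}. Then H^(2) is a normal subgroup of H which is invariant under φ_g for all g ∈ G; consequently (H^(2), G, φ|, R|) is an ideal of (H, G, φ, R) provided R(H^(2)) ⊆ G. -/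
/-- For a relative Rota-Baxter group `(H, G, φ, R)`, the subgroup
`H^(2)` generated by `{φ_g(h) h⁻¹ | h ∈ H, g ∈ G}` is normal in `H` and invariant
under `φ_g` for all `g ∈ G`; moreover `φ_ℓ(h) h⁻¹ ∈ H^(2)` for all `h ∈ H` and
`ℓ ∈ G`, so `(H^(2), G, φ|, R|)` is an ideal of `(H, G, φ, R)`. -/
theorem stmt_17 {H G : Type*} [Group H] [Group G] (φ : G →* MulAut H) (R : H → G)
    (hR : ∀ h₁ h₂ : H, R h₁ * R h₂ = R (h₁ * φ (R h₁) h₂)) :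
    (Subgroup.closure {x : H | ∃ (h : H) (g : G), x = φ g h * h⁻¹}).Normal ∧
    (∀ g : G, ∀ k ∈ Subgroup.closure {x : H | ∃ (h : H) (g : G), x = φ g h * h⁻¹},
      φ g k ∈ Subgroup.closure {x : H | ∃ (h : H) (g : G), x = φ g h * h⁻¹}) ∧
    (∀ (g : G) (h : H),
      φ g h * h⁻¹ ∈ Subgroup.closure {x : H | ∃ (h : H) (g : G), x = φ g h * h⁻¹}) := by
  set S : Set H := {x : H | ∃ (h : H) (g : G), x = φ g h * h⁻¹} with hS
  set K := Subgroup.closure S with hK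
  have hmem : ∀ (g : G) (h : H), φ g h * h⁻¹ ∈ K := fun g h =>
    Subgroup.subset_closure ⟨h, g, rfl⟩
  refine ⟨⟨?_⟩, ?_, hmem⟩
  · intro k hk h₀
    induction hk using Subgroup.closure_induction with
    | mem x hx =>
        obtain ⟨h, g, rfl⟩ := hx
        have key : h₀ * (φ g h * h⁻¹) * h₀⁻¹ =
            (φ g h₀ * h₀⁻¹)⁻¹ * (φ g (h₀ * h) * (h₀ * h)⁻¹) := by
          simp only [map_mul]
          group
        rw [key]
        exact K.mul_mem (K.inv_mem (hmem g h₀)) (hmem g (h₀ * h))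
    | one => simpa using K.one_mem
    | mul a b _ _ ha hb =>
        have : h₀ * (a * b) * h₀⁻¹ = (h₀ * a * h₀⁻¹) * (h₀ * b * h₀⁻¹) := by group
        rw [this]; exact K.mul_mem ha hb
    | inv a _ ha =>
        have : h₀ * a⁻¹ * h₀⁻¹ = (h₀ * a * h₀⁻¹)⁻¹ := by group
        rw [this]; exact K.inv_mem ha
  · intro g k hk
    induction hk using Subgroup.closure_induction with
    | mem x hx =>
        obtain ⟨h, g', rfl⟩ := hx
        have key : φ g (φ g' h * h⁻¹) =
            (φ (g * g') h * h⁻¹) * (φ g h * h⁻¹)⁻¹ := by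
          simp only [map_mul, map_inv, MulAut.mul_apply]
          group
        rw [key]
        exact K.mul_mem (hmem (g * g') h) (K.inv_mem (hmem g h))
    | one => simpa using K.one_mem
    | mul a b _ _ ha hb => rw [map_mul]; exact K.mul_mem ha hb
    | inv a _ ha => rw [map_inv]; exact K.inv_mem ha
end

section
/- Let (H, G, φ, R) be a relative Rota-Baxter group and Z^φ_R(H) = Z(H) ∩ Ker(φ∘R) ∩ Fix(φ). Then the map ω^φ_H: (H/Z^φ_R(H)) × (H/Z^φ_R(H)) → H given by ω^φ_H(h̄₁, h̄₂) = φ_{R(h₁)}(h₂)·h₂⁻¹ is well-defined, i.e., its value does not depend on the choice of coset representatives h₁, h₂. -/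
/-- For a relative Rota-Baxter group `(H, G, φ, R)` with
`Z^φ_R(H) = Z(H) ∩ Ker(φ∘R) ∩ Fix(φ)`, the map
`ω^φ_H (h̄₁, h̄₂) = φ (R h₁) h₂ * h₂⁻¹` on `(H/Z^φ_R(H)) × (H/Z^φ_R(H))` is
well-defined: its value is unchanged when representatives are multiplied by
elements of `Z^φ_R(H)`. -/
theorem stmt_19 {H G : Type*} [Group H] [Group G] (φ : G →* MulAut H) (R : H → G)
    (hR : ∀ h₁ h₂ : H, R h₁ * R h₂ = R (h₁ * φ (R h₁) h₂)) :
    ∀ h₁ h₂ z₁ z₂ : H,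
      (z₁ ∈ Subgroup.center H ∧ (∀ h : H, φ (R z₁) h = h) ∧ (∀ g : G, φ g z₁ = z₁)) →
      (z₂ ∈ Subgroup.center H ∧ (∀ h : H, φ (R z₂) h = h) ∧ (∀ g : G, φ g z₂ = z₂)) →
      φ (R (h₁ * z₁)) (h₂ * z₂) * (h₂ * z₂)⁻¹ = φ (R h₁) h₂ * h₂⁻¹ := by
  rintro h₁ h₂ z₁ z₂ ⟨hz₁c, hz₁k, hz₁f⟩ ⟨hz₂c, hz₂k, hz₂f⟩
  have hR1 : R (h₁ * z₁) = R h₁ * R z₁ := by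
    rw [hR h₁ z₁, hz₁f]
  have key : ∀ h : H, φ (R (h₁ * z₁)) h = φ (R h₁) h := by
    intro h
    rw [hR1, map_mul]
    simp [hz₁k h]
  rw [key, map_mul, hz₂f, mul_inv_rev]
  have hc := (Subgroup.mem_center_iff.mp hz₂c)
  calc φ (R h₁) h₂ * z₂ * (z₂⁻¹ * h₂⁻¹) = φ (R h₁) h₂ * h₂⁻¹ := by group
end
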